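/- arXiv:1712.06483 — 2 statements merged into one kernel-verified Lean document; each statement's English description precedes it below -/
import Mathlib

section
/- For all integers n, t with n > 2t ≥ 2, the minimum size of a t-monopoly in C_m □ K_n is at most mt. -/
open SimpleGraph

/-- `M` is a `t`-monopoly in `G`: every vertex outside `M` has at least `t` neighbors in `M`. -/
def IsMonopoly {V : Type*} (G : SimpleGraph V) (t : ℕ) (M : Set V) : Prop :=
  ∀ v ∉ M, t ≤ (G.neighborSet v ∩ M).ncard

/-- The `t`-monopoly number: least cardinality of a `t`-monopoly. -/
noncomputable def monNum {V : Type*} (G : SimpleGraph V) (t : ℕ) : ℕ :=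
  sInf {k | ∃ M : Set V, IsMonopoly G t M ∧ M.ncard = k}

/-! Fix a set `S` of `t` vertices of `K_n` and take every copy of `S` along the cycle. A vertex
`(a, w)` with `w ∉ S` has no neighbour in the set from another copy of `K_n`, since those neighbours
lie in the same column `w`, and it is adjacent to all `t` vertices `(a, s)` with `s ∈ S` in its own
copy. This gives a `t`-monopoly of size `mt`. -/

theorem monNum_le_ncard {V : Type*} {G : SimpleGraph V} {t : ℕ} {M : Set V}
    (hM : IsMonopoly G t M) : monNum G t ≤ M.ncard :=
  Nat.sInf_le ⟨M, hM, rfl⟩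

theorem boxProd_completeGraph_neighborSet_inter_univ_prod {V W : Type*} (G : SimpleGraph V)
    {S : Set W} {a : V} {w : W} (hw : w ∉ S) :
    (G □ completeGraph W).neighborSet (a, w) ∩ Set.univ ×ˢ S = {a} ×ˢ S := by
  ext ⟨b, s⟩
  simp only [Set.mem_inter_iff, mem_neighborSet, boxProd_adj, completeGraph_eq_top, top_adj,
    Set.mem_prod, Set.mem_univ, true_and, Set.mem_singleton_iff]
  constructor
  · rintro ⟨⟨-, rfl⟩ | ⟨-, rfl⟩, hs⟩
    · exact absurd hs hw
    · exact ⟨rfl, hs⟩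
  · rintro ⟨rfl, hs⟩
    exact ⟨Or.inr ⟨fun h => hw (h ▸ hs), rfl⟩, hs⟩

theorem isMonopoly_boxProd_completeGraph_univ_prod {V W : Type*} (G : SimpleGraph V)
    (S : Set W) : IsMonopoly (G □ completeGraph W) S.ncard (Set.univ ×ˢ S) := by
  rintro ⟨a, w⟩ hv
  have hw : w ∉ S := fun hw => hv ⟨Set.mem_univ a, hw⟩
  rw [boxProd_completeGraph_neighborSet_inter_univ_prod G hw, Set.singleton_prod,
    Set.ncard_image_of_injective S (Prod.mk_right_injective a)]

theorem mon_cycle_complete_high_general (m n t : ℕ) (hn : 2 * t < n) :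
    monNum ((cycleGraph m).boxProd (completeGraph (Fin n))) t ≤ m * t := by
  obtain ⟨S, -, hS⟩ := (Finset.univ : Finset (Fin n)).exists_subset_card_eq
    (show t ≤ Finset.univ.card by rw [Finset.card_fin]; omega)
  have hSt : (S : Set (Fin n)).ncard = t := by rw [Set.ncard_coe_finset, hS]
  calc monNum ((cycleGraph m).boxProd (completeGraph (Fin n))) t
      ≤ (Set.univ ×ˢ (S : Set (Fin n))).ncard :=
        monNum_le_ncard (hSt ▸ isMonopoly_boxProd_completeGraph_univ_prod _ _)
    _ = m * t := by rw [Set.ncard_prod, Set.ncard_univ, Nat.card_eq_fintype_card,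
        Fintype.card_fin, hSt]

/-- For `n > 2t ≥ 2`, `mon_t(C_m □ K_n) ≤ mt`. -/
theorem mon_cycle_complete_high (m n t : ℕ) (hm : 3 ≤ m) (ht : 1 ≤ t) (hn : 2 * t < n) :
    monNum ((cycleGraph m).boxProd (completeGraph (Fin n))) t ≤ m * t :=
  mon_cycle_complete_high_general m n t hn
end

section
/- For every n ≥ 3, the minimum size of a 3-dynamic monopoly in C_n □ K_n equals n + 1. -/
open SimpleGraph

/-- One step of the activation process: add every vertex having at least `τ v` active neighbors. -/
def activStep {V : Type*} (G : SimpleGraph V) (τ : V → ℕ) (A : Set V) : Set V :=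
  A ∪ {v | τ v ≤ (G.neighborSet v ∩ A).ncard}

/-- `D` is a `τ`-dynamic monopoly: iterating the activation process from `D` activates all of `V`. -/
def IsDynMonopoly {V : Type*} (G : SimpleGraph V) (τ : V → ℕ) (D : Set V) : Prop :=
  ∃ k : ℕ, (activStep G τ)^[k] D = Set.univ

/-- The `τ`-dynamic monopoly number: least cardinality of a `τ`-dynamic monopoly. -/
noncomputable def dynNum {V : Type*} (G : SimpleGraph V) (τ : V → ℕ) : ℕ :=
  sInf {k | ∃ D : Set V, IsDynMonopoly G τ D ∧ D.ncard = k}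

/-- Dynamic monopoly number with constant threshold `t`. -/
noncomputable def dynNumC {V : Type*} (G : SimpleGraph V) (t : ℕ) : ℕ :=
  dynNum G (fun _ => t)
open Fin.CommRing
section general
variable {V : Type*} {G : SimpleGraph V} {τ : V → ℕ}

lemma subset_activStep (A : Set V) : A ⊆ activStep G τ A := Set.subset_union_left

lemma activStep_mono [Finite V] {A B : Set V} (h : A ⊆ B) :
    activStep G τ A ⊆ activStep G τ B := by
  intro v hv
  rcases hv with hv | hv
  · exact Or.inl (h hv)
  · exact Or.inr (le_trans hv (Set.ncard_le_ncard
      (Set.inter_subset_inter_right _ h) (Set.toFinite _)))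

lemma subset_iterate (A : Set V) : ∀ k, A ⊆ (activStep G τ)^[k] A
  | 0 => subset_rfl
  | (k+1) => by
      rw [Function.iterate_succ_apply']
      exact (subset_iterate A k).trans (subset_activStep _)

lemma iterate_le (A : Set V) {k l : ℕ} (h : k ≤ l) :
    (activStep G τ)^[k] A ⊆ (activStep G τ)^[l] A := by
  obtain ⟨m, rfl⟩ := Nat.exists_eq_add_of_le h
  rw [Nat.add_comm, Function.iterate_add_apply]
  exact subset_iterate _ m

def reach (G : SimpleGraph V) (τ : V → ℕ) (A : Set V) : Set V :=
  ⋃ k, (activStep G τ)^[k] A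

lemma seed_mem_reach {A : Set V} {v : V} (h : v ∈ A) : v ∈ reach G τ A :=
  Set.mem_iUnion.mpr ⟨0, h⟩

lemma reach_step [Finite V] {A : Set V} {v u1 u2 u3 : V}
    (a1 : G.Adj v u1) (a2 : G.Adj v u2) (a3 : G.Adj v u3)
    (d12 : u1 ≠ u2) (d13 : u1 ≠ u3) (d23 : u2 ≠ u3)
    (h1 : u1 ∈ reach G τ A) (h2 : u2 ∈ reach G τ A) (h3 : u3 ∈ reach G τ A)
    (hτ : τ v ≤ 3) : v ∈ reach G τ A := by
  obtain ⟨k1, hk1⟩ := Set.mem_iUnion.mp h1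
  obtain ⟨k2, hk2⟩ := Set.mem_iUnion.mp h2
  obtain ⟨k3, hk3⟩ := Set.mem_iUnion.mp h3
  set k := max k1 (max k2 k3) with hk
  have hu1 : u1 ∈ (activStep G τ)^[k] A := iterate_le A (le_max_left k1 _) hk1
  have hu2 : u2 ∈ (activStep G τ)^[k] A :=
    iterate_le A ((le_max_left k2 k3).trans (le_max_right k1 _)) hk2
  have hu3 : u3 ∈ (activStep G τ)^[k] A :=
    iterate_le A ((le_max_right k2 k3).trans (le_max_right k1 _)) hk3
  refine Set.mem_iUnion.mpr ⟨k + 1, ?_⟩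
  rw [Function.iterate_succ_apply']
  refine Or.inr (hτ.trans ?_)
  have hsub : ({u1, u2, u3} : Set V) ⊆ G.neighborSet v ∩ (activStep G τ)^[k] A := by
    rintro u (rfl | rfl | rfl)
    · exact ⟨a1, hu1⟩
    · exact ⟨a2, hu2⟩
    · exact ⟨a3, hu3⟩
  calc (3 : ℕ) = ({u1, u2, u3} : Set V).ncard := by
        rw [Set.ncard_insert_of_notMem (by simp [d12, d13]), Set.ncard_pair d23]
    _ ≤ _ := Set.ncard_le_ncard hsub (Set.toFinite _)

lemma isDynMonopoly_of_reach [Finite V] {A : Set V} (h : ∀ v, v ∈ reach G τ A) :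
    IsDynMonopoly G τ A := by
  have := Fintype.ofFinite V
  choose f hf using fun v => Set.mem_iUnion.mp (h v)
  refine ⟨Finset.univ.sup f, Set.eq_univ_of_forall fun v => ?_⟩
  exact iterate_le A (Finset.le_sup (Finset.mem_univ v)) (hf v)

lemma not_isDynMonopoly [Finite V] {A C : Set V} (hAC : A ⊆ C)
    (hC : activStep G τ C ⊆ C) (hne : C ≠ Set.univ) : ¬ IsDynMonopoly G τ A := by
  rintro ⟨k, hk⟩
  have hsub : ∀ m, (activStep G τ)^[m] A ⊆ C := by
    intro m
    induction m with
    | zero => exact hAC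
    | succ m ih =>
        rw [Function.iterate_succ_apply']
        exact (activStep_mono ih).trans hC
  exact hne (Set.eq_univ_of_univ_subset (hk ▸ hsub k))

end general

section finfacts
variable {n : ℕ} [NeZero n]

lemma fin_val_one (hn : 3 ≤ n) : ((1 : Fin n)).val = 1 := by
  rw [Fin.val_one']
  exact Nat.mod_eq_of_lt (by omega)

lemma fin_one_ne_zero (hn : 3 ≤ n) : (1 : Fin n) ≠ 0 := by
  intro h
  have := congrArg Fin.val h
  rw [fin_val_one hn] at this
  simp at this

lemma fin_two_ne_zero (hn : 3 ≤ n) : (2 : Fin n) ≠ 0 := by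
  intro h
  have h2 : ((2 : Fin n)).val = 2 := by
    have : (2 : Fin n) = 1 + 1 := by norm_num
    rw [this, Fin.val_add, fin_val_one hn]
    exact Nat.mod_eq_of_lt (by omega)
  have := congrArg Fin.val h
  rw [h2] at this
  simp at this

lemma fin_succ_ne (hn : 3 ≤ n) (i : Fin n) : i + 1 ≠ i := by
  intro h
  exact fin_one_ne_zero hn (by linear_combination h)

lemma fin_pred_ne (hn : 3 ≤ n) (i : Fin n) : i - 1 ≠ i := by
  intro h
  exact fin_one_ne_zero hn (by linear_combination -h)

lemma fin_pred_ne_succ (hn : 3 ≤ n) (i : Fin n) : i - 1 ≠ i + 1 := by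
  intro h
  exact fin_two_ne_zero hn (by linear_combination -h)

lemma cyc_adj_iff (hn : 3 ≤ n) {i a : Fin n} :
    (cycleGraph n).Adj i a ↔ a = i - 1 ∨ a = i + 1 := by
  rw [cycleGraph_adj']
  constructor
  · rintro (h | h)
    · left
      have h' : i - a = 1 := Fin.ext (by rw [h, fin_val_one hn])
      linear_combination -h'
    · right
      have h' : a - i = 1 := Fin.ext (by rw [h, fin_val_one hn])
      linear_combination h'
  · rintro (rfl | rfl)
    · left
      have : i - (i - 1) = 1 := by ring
      rw [this, fin_val_one hn]
    · right
      have : i + 1 - i = 1 := by ring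
      rw [this, fin_val_one hn]

end finfacts

/-- Abbreviation for the box product of the cycle with the complete graph. -/
abbrev GPr (n : ℕ) : SimpleGraph (Fin n × Fin n) :=
  (cycleGraph n).boxProd (completeGraph (Fin n))

section prodgraph
variable {n : ℕ} [NeZero n]

lemma cyc_adj_iff' (hn : 3 ≤ n) {i a : Fin n} :
    (cycleGraph n).Adj i a ↔ a = i - 1 ∨ a = i + 1 := cyc_adj_iff hn

lemma gp_adj {p q : Fin n × Fin n} :
    (GPr n).Adj p q ↔ ((cycleGraph n).Adj p.1 q.1 ∧ p.2 = q.2) ∨ (p.1 = q.1 ∧ p.2 ≠ q.2) := by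
  rw [boxProd_adj]
  simp only [completeGraph, top_adj, ne_eq]
  tauto

lemma gp_adj_left (hn : 3 ≤ n) {i a : Fin n} (h : a = i - 1 ∨ a = i + 1) (j : Fin n) :
    (GPr n).Adj (i, j) (a, j) :=
  gp_adj.mpr (Or.inl ⟨(cyc_adj_iff' hn).mpr h, rfl⟩)

lemma gp_adj_right {i j b : Fin n} (h : j ≠ b) : (GPr n).Adj (i, j) (i, b) :=
  gp_adj.mpr (Or.inr ⟨rfl, h⟩)

lemma mem_gp_nbr (hn : 3 ≤ n) {i j : Fin n} {u : Fin n × Fin n} :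
    u ∈ (GPr n).neighborSet (i, j) ↔
      (u = (i - 1, j) ∨ u = (i + 1, j)) ∨ (u.1 = i ∧ u.2 ≠ j) := by
  rw [mem_neighborSet, gp_adj]
  constructor
  · rintro (⟨hadj, he⟩ | ⟨he, hne⟩)
    · rcases (cyc_adj_iff' hn).mp hadj with h | h
      · exact Or.inl (Or.inl (Prod.ext h he.symm))
      · exact Or.inl (Or.inr (Prod.ext h he.symm))
    · exact Or.inr ⟨he.symm, fun hh => hne hh.symm⟩
  · rintro ((rfl | rfl) | ⟨h1, h2⟩)
    · exact Or.inl ⟨(cyc_adj_iff' hn).mpr (Or.inl rfl), rfl⟩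
    · exact Or.inl ⟨(cyc_adj_iff' hn).mpr (Or.inr rfl), rfl⟩
    · exact Or.inr ⟨h1.symm, fun hh => h2 hh.symm⟩

end prodgraph

section upper
variable {n : ℕ} [NeZero n]

/-- The seed set: the diagonal together with `(0,1)`. -/
def diagSeed (n : ℕ) [NeZero n] : Set (Fin n × Fin n) :=
  Set.range (fun i : Fin n => (i, i)) ∪ {((0 : Fin n), (1 : Fin n))}

lemma upper_reach (hn : 3 ≤ n) (v : Fin n × Fin n) :
    v ∈ reach (GPr n) (fun _ => 3) (diagSeed n) := by
  set R := reach (GPr n) (fun _ => 3) (diagSeed n) with hR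
  have hseed : ∀ i : Fin n, (i, i) ∈ R := fun i => seed_mem_reach (Or.inl ⟨i, rfl⟩)
  have hs01 : ((0 : Fin n), (1 : Fin n)) ∈ R := seed_mem_reach (Or.inr rfl)
  have h10 : (0 : Fin n) ≠ 1 := (fin_one_ne_zero hn).symm
  have hm1 : (0 : Fin n) - 1 ≠ 1 := by
    have := fin_pred_ne_succ hn (0 : Fin n)
    rwa [zero_add] at this
  have hstep1 : ((0 : Fin n), (0 : Fin n) - 1) ∈ R := by
    refine reach_step (u1 := ((0 : Fin n) - 1, (0 : Fin n) - 1))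
      (u2 := ((0 : Fin n), (0 : Fin n))) (u3 := ((0 : Fin n), (1 : Fin n)))
      (gp_adj_left hn (Or.inl rfl) _) (gp_adj_right (fin_pred_ne hn 0))
      (gp_adj_right hm1) ?_ ?_ ?_ (hseed _) (hseed 0) hs01 le_rfl
    · exact fun h => fin_pred_ne hn 0 (congrArg Prod.fst h)
    · exact fun h => fin_pred_ne hn 0 (congrArg Prod.fst h)
    · exact fun h => h10 (congrArg Prod.snd h)
  have hcol0 : ∀ j, ((0 : Fin n), j) ∈ R := by
    intro j
    rcases eq_or_ne j 0 with rfl | h0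
    · exact hseed 0
    rcases eq_or_ne j 1 with rfl | h1
    · exact hs01
    rcases eq_or_ne j ((0 : Fin n) - 1) with rfl | hjm
    · exact hstep1
    refine reach_step (u1 := ((0 : Fin n), (0 : Fin n)))
      (u2 := ((0 : Fin n), (1 : Fin n))) (u3 := ((0 : Fin n), (0 : Fin n) - 1))
      (gp_adj_right h0) (gp_adj_right h1) (gp_adj_right hjm)
      ?_ ?_ ?_ (hseed 0) hs01 hstep1 le_rfl
    · exact fun h => h10 (congrArg Prod.snd h)
    · exact fun h => (fin_pred_ne hn 0).symm (congrArg Prod.snd h)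
    · exact fun h => hm1 (congrArg Prod.snd h).symm
  have hcolstep : ∀ i : Fin n, (∀ j, (i + 1, j) ∈ R) → ∀ j, (i, j) ∈ R := by
    intro i ih j
    have hstep : (i, i - 1) ∈ R := by
      refine reach_step (u1 := (i + 1, i - 1)) (u2 := (i - 1, i - 1)) (u3 := (i, i))
        (gp_adj_left hn (Or.inr rfl) _) (gp_adj_left hn (Or.inl rfl) _)
        (gp_adj_right (fin_pred_ne hn i))
        ?_ ?_ ?_ (ih _) (hseed _) (hseed i) le_rfl
      · exact fun h => (fin_pred_ne_succ hn i).symm (congrArg Prod.fst h)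
      · exact fun h => fin_succ_ne hn i (congrArg Prod.fst h)
      · exact fun h => fin_pred_ne hn i (congrArg Prod.fst h)
    rcases eq_or_ne j i with rfl | hji
    · exact hseed j
    rcases eq_or_ne j (i - 1) with rfl | hjp
    · exact hstep
    refine reach_step (u1 := (i + 1, j)) (u2 := (i, i)) (u3 := (i, i - 1))
      (gp_adj_left hn (Or.inr rfl) _) (gp_adj_right hji) (gp_adj_right hjp)
      ?_ ?_ ?_ (ih j) (hseed i) hstep le_rfl
    · exact fun h => fin_succ_ne hn i (congrArg Prod.fst h)
    · exact fun h => fin_succ_ne hn i (congrArg Prod.fst h)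
    · exact fun h => (fin_pred_ne hn i).symm (congrArg Prod.snd h)
  have hall : ∀ m : ℕ, ∀ j, ((0 : Fin n) - (m : Fin n), j) ∈ R := by
    intro m
    induction m with
    | zero => simpa using hcol0
    | succ m ih =>
        have key : (0 : Fin n) - ((m : ℕ) : Fin n) =
            ((0 : Fin n) - (((m + 1 : ℕ)) : Fin n)) + 1 := by
          push_cast
          ring
        exact hcolstep _ (fun j => by rw [← key]; exact ih j)
  obtain ⟨a, b⟩ := v
  have h := hall ((0 - a : Fin n)).val b
  rwa [Fin.cast_val_eq_self, sub_sub_cancel] at h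

end upper

section lower
variable {n : ℕ} [NeZero n]

lemma ncard_le_two_of_subset_pair {α : Type*} {s : Set α} {a b : α} (h : s ⊆ {a, b}) :
    s.ncard ≤ 2 := by
  calc s.ncard ≤ ({a, b} : Set α).ncard := Set.ncard_le_ncard h (Set.toFinite _)
    _ ≤ 2 := by
        refine le_trans (Set.ncard_insert_le a {b}) ?_
        simp

lemma colmiss_closed (hn : 3 ≤ n) (i : Fin n) :
    activStep (GPr n) (fun _ => 3) {p : Fin n × Fin n | p.1 ≠ i} ⊆
      {p : Fin n × Fin n | p.1 ≠ i} := by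
  intro p hp
  rcases hp with hp | hp
  · exact hp
  obtain ⟨pi, pj⟩ := p
  intro hpi
  simp only at hpi
  subst hpi
  have hp3 : 3 ≤ ((GPr n).neighborSet (pi, pj) ∩ {q : Fin n × Fin n | q.1 ≠ pi}).ncard := hp
  have hsub : (GPr n).neighborSet (pi, pj) ∩ {q : Fin n × Fin n | q.1 ≠ pi} ⊆
      {(pi - 1, pj), (pi + 1, pj)} := by
    rintro u ⟨hu, hui⟩
    rcases (mem_gp_nbr hn).mp hu with (rfl | rfl) | ⟨h1, _⟩
    · exact Or.inl rfl
    · exact Or.inr rfl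
    · exact absurd h1 hui
  have := ncard_le_two_of_subset_pair hsub
  omega

lemma lower_bound (hn : 3 ≤ n) {D : Set (Fin n × Fin n)}
    (hD : IsDynMonopoly (GPr n) (fun _ => 3) D) : n + 1 ≤ D.ncard := by
  by_contra hlt
  push_neg at hlt
  have hcard : D.ncard ≤ n := by omega
  have hcol : ∀ i : Fin n, ∃ j, (i, j) ∈ D := by
    intro i
    by_contra hno
    push_neg at hno
    refine not_isDynMonopoly (C := {p : Fin n × Fin n | p.1 ≠ i}) ?_
      (colmiss_closed hn i) ?_ hD
    · intro p hp hpeq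
      exact hno p.2 (by
        have : p = (i, p.2) := Prod.ext hpeq rfl
        rwa [this] at hp)
    · intro h
      have : ((i, (0 : Fin n)) : Fin n × Fin n) ∈ {p : Fin n × Fin n | p.1 ≠ i} :=
        h.symm ▸ Set.mem_univ _
      exact this rfl
  choose f hf using hcol
  have hinj : Function.Injective (fun i : Fin n => ((i, f i) : Fin n × Fin n)) :=
    fun a b h => congrArg Prod.fst h
  have hSD : Set.range (fun i : Fin n => ((i, f i) : Fin n × Fin n)) ⊆ D := by
    rintro _ ⟨i, rfl⟩; exact hf i
  have hScard : (Set.range fun i : Fin n => ((i, f i) : Fin n × Fin n)).ncard = n := by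
    rw [← Set.image_univ, Set.ncard_image_of_injective _ hinj, Set.ncard_univ,
      Nat.card_eq_fintype_card, Fintype.card_fin]
  have hDS : Set.range (fun i : Fin n => ((i, f i) : Fin n × Fin n)) = D :=
    Set.eq_of_subset_of_ncard_le hSD (by rw [hScard]; exact hcard) (Set.toFinite _)
  set C : Set (Fin n × Fin n) :=
    {p | p.2 = f p.1 ∨ (p.2 = f (p.1 - 1) ∧ p.2 = f (p.1 + 1))} with hC
  have hDC : D ⊆ C := by
    rw [← hDS]; rintro _ ⟨i, rfl⟩; exact Or.inl rfl
  have hclosed : activStep (GPr n) (fun _ => 3) C ⊆ C := by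
    intro p hp
    rcases hp with hp | hp
    · exact hp
    obtain ⟨i, j⟩ := p
    by_contra hpc
    rw [hC, Set.mem_setOf_eq, not_or] at hpc
    obtain ⟨hj1, hj2⟩ := hpc
    simp only at hj1 hj2
    have hp3 : 3 ≤ ((GPr n).neighborSet (i, j) ∩ C).ncard := hp
    have hpair : ∃ a b : Fin n × Fin n, (GPr n).neighborSet (i, j) ∩ C ⊆ {a, b} := by
      by_cases hA : f (i - 1) = f (i + 1)
      · refine ⟨(i, f i), (i, f (i - 1)), ?_⟩
        rintro u ⟨hu, huC⟩
        rcases (mem_gp_nbr hn).mp hu with (rfl | rfl) | ⟨h1, _⟩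
        · rcases huC with h | ⟨_, h⟩
          · exact absurd ⟨h, h.trans hA⟩ hj2
          · rw [sub_add_cancel] at h; exact absurd h hj1
        · rcases huC with h | ⟨h, _⟩
          · exact absurd ⟨h.trans hA.symm, h⟩ hj2
          · rw [add_sub_cancel_right] at h; exact absurd h hj1
        · rcases huC with h | ⟨h, _⟩
          · rw [h1] at h; exact Or.inl (Prod.ext h1 h)
          · rw [h1] at h; exact Or.inr (Prod.ext h1 h)
      · by_cases hB : j = f (i - 1)
        · refine ⟨(i, f i), (i - 1, j), ?_⟩
          rintro u ⟨hu, huC⟩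
          rcases (mem_gp_nbr hn).mp hu with (rfl | rfl) | ⟨h1, _⟩
          · exact Or.inr rfl
          · rcases huC with h | ⟨h, _⟩
            · exact absurd ⟨hB, h⟩ hj2
            · rw [add_sub_cancel_right] at h; exact absurd h hj1
          · rcases huC with h | ⟨ha, hb⟩
            · rw [h1] at h; exact Or.inl (Prod.ext h1 h)
            · rw [h1] at ha hb; exact absurd (ha.symm.trans hb) hA
        · refine ⟨(i, f i), (i + 1, j), ?_⟩
          rintro u ⟨hu, huC⟩
          rcases (mem_gp_nbr hn).mp hu with (rfl | rfl) | ⟨h1, _⟩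
          · rcases huC with h | ⟨_, h⟩
            · exact absurd h hB
            · rw [sub_add_cancel] at h; exact absurd h hj1
          · exact Or.inr rfl
          · rcases huC with h | ⟨ha, hb⟩
            · rw [h1] at h; exact Or.inl (Prod.ext h1 h)
            · rw [h1] at ha hb; exact absurd (ha.symm.trans hb) hA
    obtain ⟨a, b, hsub⟩ := hpair
    have := ncard_le_two_of_subset_pair hsub
    omega
  have hne : C ≠ Set.univ := by
    have hex : ∃ j : Fin n, j ≠ f 0 ∧ j ≠ f 1 := by
      by_contra hno
      push_neg at hno
      have hsubF : (Finset.univ : Finset (Fin n)) ⊆ {f 0, f 1} := by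
        intro j _
        rcases eq_or_ne j (f 0) with rfl | h0
        · exact Finset.mem_insert_self _ _
        · simp [hno j h0]
      have hcardF := Finset.card_le_card hsubF
      rw [Finset.card_univ, Fintype.card_fin] at hcardF
      have h2 : ({f 0, f 1} : Finset (Fin n)).card ≤ 2 :=
        le_trans (Finset.card_insert_le _ _) (by simp)
      omega
    obtain ⟨j, hj0, hj1⟩ := hex
    intro hCeq
    have hmem : ((0 : Fin n), j) ∈ C := hCeq.symm ▸ Set.mem_univ _
    rcases hmem with h | ⟨_, h⟩
    · exact hj0 h
    · rw [zero_add] at h; exact hj1 h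
  exact not_isDynMonopoly hDC hclosed hne hD

end lower


/-- For `n ≥ 3`, `dyn₃(C_n □ K_n) = n + 1`. -/
theorem dyn3_cycle_complete (n : ℕ) (hn : 3 ≤ n) :
    dynNumC ((cycleGraph n).boxProd (completeGraph (Fin n))) 3 = n + 1 := by
  haveI : NeZero n := ⟨by omega⟩
  have hub : IsDynMonopoly (GPr n) (fun _ => 3) (diagSeed n) :=
    isDynMonopoly_of_reach (upper_reach hn)
  have hle : (diagSeed n).ncard ≤ n + 1 := by
    refine le_trans (Set.ncard_union_le _ _) ?_
    have hr : (Set.range fun i : Fin n => ((i, i) : Fin n × Fin n)).ncard = n := by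
      rw [← Set.image_univ,
        Set.ncard_image_of_injective _ (fun a b h => congrArg Prod.fst h),
        Set.ncard_univ, Nat.card_eq_fintype_card, Fintype.card_fin]
    rw [diagSeed] at *
    rw [hr, Set.ncard_singleton]
  have hcardD : (diagSeed n).ncard = n + 1 := le_antisymm hle (lower_bound hn hub)
  have hmem : n + 1 ∈ {k | ∃ D : Set (Fin n × Fin n),
      IsDynMonopoly (GPr n) (fun _ => 3) D ∧ D.ncard = k} := ⟨diagSeed n, hub, hcardD⟩
  unfold dynNumC dynNum
  refine le_antisymm (Nat.sInf_le hmem) (le_csInf ⟨_, hmem⟩ ?_)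
  rintro k ⟨D, hDk, rfl⟩
  exact lower_bound hn hDk
end
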